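/- At β = β₀ the moment function m(Z_it, β, Γ_{Z,it}) is Neyman orthogonal with respect to Γ_{Z,it}: E[∂m(Z_it, β₀, Γ_{Z,it})/∂Γ_{Y,it}] = −E[X_it − Γ_{X,it}] = 0, and E[∂m(Z_it, β₀, Γ_{Z,it})/∂Γ_{X,it}] = E[X_it − Γ_{X,it}]'β₀ − E[Y_it − Γ_{Y,it} − (X_it − Γ_{X,it})'β₀] = 0. -/
import Mathlib


open MeasureTheory Matrix

noncomputable section

/-- Neyman orthogonality of the moment function
`m(Z,β,Γ_Z) = (X - Γ_X)(Y - Γ_Y - (X - Γ_X)'β)` at `β = β₀` with respect to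
`Γ_Z = (Γ_Y, Γ_X)`:  `E[∂m/∂Γ_Y] = -E[X - Γ_X] = 0` and
`E[∂m/∂Γ_X] = E[X - Γ_X]'β₀ - E[Y - Γ_Y - (X - Γ_X)'β₀] = 0`.
Here `Γ_X = E[X | α, γ]` and `Γ_Y = E[Y | α, γ]`, encoded through the σ-field `𝒜`
generated by the fixed effects `(α_i, γ_t)`, and `Y - Γ_Y - (X - Γ_X)'β₀ = ε`. -/
theorem neyman_orthogonality
    {Om : Type*} [m0 : MeasurableSpace Om] (μ : Measure Om) [IsProbabilityMeasure μ]
    -- 𝒜 : the σ-field generated by the fixed effects (α_i, γ_t)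
    (𝒜 : MeasurableSpace Om) (h𝒜 : 𝒜 ≤ m0)
    {K : ℕ}
    (X ΓX : Om → Fin K → ℝ) (Y ΓY ε : Om → ℝ) (β₀ : Fin K → ℝ)
    -- the model `Y - Γ_Y = (X - Γ_X)'β₀ + ε`
    (hmodel : ∀ ω, Y ω - ΓY ω = (fun k => X ω k - ΓX ω k) ⬝ᵥ β₀ + ε ω)
    -- `Γ_X = E[X | α, γ]`, `Γ_Y = E[Y | α, γ]`
    (hΓX : ∀ k, μ[(fun ω => X ω k) | 𝒜] =ᵐ[μ] fun ω => ΓX ω k)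
    (hΓY : μ[Y | 𝒜] =ᵐ[μ] ΓY)
    -- integrability side conditions
    (hintX : ∀ k, Integrable (fun ω => X ω k) μ) (hintY : Integrable Y μ)
    (hintΓX : ∀ k, Integrable (fun ω => ΓX ω k) μ) (hintΓY : Integrable ΓY μ) :
    -- E[∂m/∂Γ_Y] = -E[X - Γ_X] = 0  (componentwise)
    ((∀ k, ∫ ω, -(X ω k - ΓX ω k) ∂μ = 0) ∧ (∀ k, ∫ ω, (X ω k - ΓX ω k) ∂μ = 0))
    -- E[∂m/∂Γ_X] = E[X - Γ_X]'β₀ - E[Y - Γ_Y - (X - Γ_X)'β₀] = 0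
    ∧ ∫ ω, ((fun k => X ω k - ΓX ω k) ⬝ᵥ β₀
        - (Y ω - ΓY ω - (fun k => X ω k - ΓX ω k) ⬝ᵥ β₀)) ∂μ = 0 := by
  have hX : ∀ k, ∫ ω, (X ω k - ΓX ω k) ∂μ = 0 := by
    intro k
    rw [integral_sub (hintX k) (hintΓX k), sub_eq_zero]
    have h := integral_congr_ae (hΓX k)
    rw [integral_condExp h𝒜] at h
    exact h
  have hY : ∫ ω, (Y ω - ΓY ω) ∂μ = 0 := by
    rw [integral_sub hintY hintΓY, sub_eq_zero]
    have h := integral_congr_ae hΓY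
    rw [integral_condExp h𝒜] at h
    exact h
  have hdotint : Integrable (fun ω => (fun k => X ω k - ΓX ω k) ⬝ᵥ β₀) μ := by
    simp only [dotProduct]
    exact integrable_finset_sum _ (fun k _ => by
      exact ((hintX k).sub (hintΓX k)).mul_const (β₀ k))
  have hdot : ∫ ω, (fun k => X ω k - ΓX ω k) ⬝ᵥ β₀ ∂μ = 0 := by
    simp only [dotProduct]
    have hterm : ∀ k : Fin K, Integrable (fun ω => (X ω k - ΓX ω k) * β₀ k) μ :=
      fun k => by exact ((hintX k).sub (hintΓX k)).mul_const (β₀ k)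
    rw [integral_finset_sum _ (fun k _ => hterm k)]
    refine Finset.sum_eq_zero fun k _ => ?_
    rw [integral_mul_const, hX k, zero_mul]
  refine ⟨⟨fun k => ?_, hX⟩, ?_⟩
  · rw [integral_neg, hX k, neg_zero]
  · have : (fun ω => ((fun k => X ω k - ΓX ω k) ⬝ᵥ β₀
        - (Y ω - ΓY ω - (fun k => X ω k - ΓX ω k) ⬝ᵥ β₀)))
        = fun ω => (2 : ℝ) * ((fun k => X ω k - ΓX ω k) ⬝ᵥ β₀) - (Y ω - ΓY ω) := by
      funext ω; ring
    have hi1 : Integrable (fun ω => (2:ℝ) * ((fun k => X ω k - ΓX ω k) ⬝ᵥ β₀)) μ :=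
      hdotint.const_mul 2
    have hi2 : Integrable (fun ω => Y ω - ΓY ω) μ := hintY.sub hintΓY
    rw [this, integral_sub hi1 hi2, integral_const_mul, hdot, hY, mul_zero, sub_zero]

end
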